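/- Assume G(m) is Buchsbaum. If i is an index with a_i > b_i, then ω_i ∈ maxAp_M(S), i.e. ω_i is a maximal element of the Apery set Ap_{g_1}(S) with respect to the partial order ≤_M. -/

import Mathlib

/-!
Common setup: the numerical semigroup ring `R = k[[t^S]]`, its maximal ideal `m`,
the associated graded ring `G(m)` (realized as the Rees algebra `R[mt]` modulo
the extension of `m`, the standard presentation of `⊕_{h≥0} m^h/m^{h+1}`),
the homogeneous maximal ideal `𝓜`, the reduction number `r`, initial forms
`t^s*`, Apery sets, the invariants `a_i`, `b_i`, `l_i`, the order function,
the partial order `≤_M`, symmetry, `M`-purity, Buchsbaumness and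
Cohen-Macaulayness (via their characterizations `(0:𝓜) = (0:𝓜^r)` and
`(0:𝓜^r) = 0` valid in this one-dimensional graded setting).
-/

set_option maxHeartbeats 1000000
set_option synthInstance.maxHeartbeats 1000000

open scoped Pointwise
open Polynomial

noncomputable section

namespace NumSgrp

/-- The numerical semigroup `S` generated by `g 0 < g 1 < ⋯ < g n`. -/
def S {n : ℕ} (g : Fin (n + 1) → ℕ) : AddSubmonoid ℕ := AddSubmonoid.closure (Set.range g)

/-- `setM g h` is the `h`-fold sumset `M + ⋯ + M` of the maximal ideal
`M = S \ {0}`; by convention `setM g 0 = S` (corresponding to `m^0 = R`). -/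
def setM {n : ℕ} (g : Fin (n + 1) → ℕ) : ℕ → Set ℕ
  | 0 => (S g : Set ℕ)
  | h+1 => ({u : ℕ | u ∈ S g ∧ u ≠ 0} + setM g h : Set ℕ)

/-- `ordS g s` = ord(s) = max { h | s ∈ hM }. -/
def ordS {n : ℕ} (g : Fin (n + 1) → ℕ) (s : ℕ) : ℕ := sSup {h | s ∈ setM g h}

/-- `ap g i` = ω_i, the least element of `S` congruent to `i` modulo `g 0`. -/
def ap {n : ℕ} (g : Fin (n + 1) → ℕ) (i : ℕ) : ℕ := sInf {s | s ∈ S g ∧ s % g 0 = i}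

/-- The Apery set `Ap_{g_1}(S) = {ω_0, …, ω_{g_1-1}}`. -/
def apSet {n : ℕ} (g : Fin (n + 1) → ℕ) : Set ℕ := {s | ∃ i < g 0, s = ap g i}

/-- The blow-up `S' = ⟨g_1, g_2 - g_1, …, g_n - g_1⟩`. -/
def S' {n : ℕ} (g : Fin (n + 1) → ℕ) : AddSubmonoid ℕ :=
  AddSubmonoid.closure (insert (g 0) (Set.range fun i => g i - g 0))

/-- `ap' g i` = ω'_i, the least element of `S'` congruent to `i` modulo `g 0`. -/
def ap' {n : ℕ} (g : Fin (n + 1) → ℕ) (i : ℕ) : ℕ := sInf {s | s ∈ S' g ∧ s % g 0 = i}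

/-- The Apery set `Ap_{g_1}(S') = {ω'_0, …, ω'_{g_1-1}}`. -/
def apSet' {n : ℕ} (g : Fin (n + 1) → ℕ) : Set ℕ := {s | ∃ i < g 0, s = ap' g i}

/-- `aa g i` = a_i, the unique integer with ω_i = ω'_i + a_i g_1. -/
def aa {n : ℕ} (g : Fin (n + 1) → ℕ) (i : ℕ) : ℕ := (ap g i - ap' g i) / g 0

/-- `bb g i` = b_i = ord(ω_i). -/
def bb {n : ℕ} (g : Fin (n + 1) → ℕ) (i : ℕ) : ℕ := ordS g (ap g i)

/-- The partial order `u ≤_M u'`: there is `s ∈ S` with `u + s = u'` and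
`ord u + ord s = ord u'`. -/
def leM {n : ℕ} (g : Fin (n + 1) → ℕ) (u v : ℕ) : Prop :=
  ∃ s ∈ S g, u + s = v ∧ ordS g u + ordS g s = ordS g v

/-- `maxAp_M(S)`: the maximal elements of the Apery set w.r.t. `≤_M`. -/
def maxAp {n : ℕ} (g : Fin (n + 1) → ℕ) : Set ℕ :=
  {u | u ∈ apSet g ∧ ∀ v ∈ apSet g, leM g u v → v = u}

/-- `S` is `M`-pure: all elements of `maxAp_M(S)` have the same order. -/
def MPure {n : ℕ} (g : Fin (n + 1) → ℕ) : Prop :=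
  ∀ u ∈ maxAp g, ∀ v ∈ maxAp g, ordS g u = ordS g v

/-- `S` viewed inside `ℤ`. -/
def SZ {n : ℕ} (g : Fin (n + 1) → ℕ) : Set ℤ := {x | ∃ s ∈ S g, (s : ℤ) = x}

/-- The Frobenius number `g(S) = max (ℤ \ S)`. -/
def frob {n : ℕ} (g : Fin (n + 1) → ℕ) : ℤ := sSup {x : ℤ | x ∉ SZ g}

/-- `S` is symmetric: for every `x ∈ ℤ`, `x ∉ S` implies `g(S) - x ∈ S`. -/
def IsSymm {n : ℕ} (g : Fin (n + 1) → ℕ) : Prop :=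
  ∀ x : ℤ, x ∉ SZ g → frob g - x ∈ SZ g

/-- Hypotheses: `g 0 < g 1 < ⋯ < g n` is a minimal system of generators with
gcd 1, so `S` is a numerical semigroup minimally generated by the `g i`. -/
structure MinGen {n : ℕ} (g : Fin (n + 1) → ℕ) : Prop where
  smono : StrictMono g
  minimal : ∀ i, g i ∉ AddSubmonoid.closure (Set.range g \ {g i})
  gcdeq : Finset.univ.gcd g = 1

variable (k : Type*) [Field k] {n : ℕ} (g : Fin (n + 1) → ℕ)

/-- `R = k[[t^S]]`: the subalgebra of `k[[t]]` of power series supported in `S`. -/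
def Rsub : Subalgebra k (PowerSeries k) where
  carrier := {f | ∀ i, PowerSeries.coeff (R := k) i f ≠ 0 → i ∈ S g}
  zero_mem' := by intro i hi; simp at hi
  one_mem' := by
    intro i hi
    by_cases h : i = 0
    · exact h ▸ (S g).zero_mem
    · rw [PowerSeries.coeff_one, if_neg h] at hi; exact absurd rfl hi
  add_mem' := by
    intro a b ha hb i hi
    rw [map_add] at hi
    by_cases h : PowerSeries.coeff (R := k) i a ≠ 0
    · exact ha i h
    · push_neg at h
      rw [h, zero_add] at hi
      exact hb i hi
  mul_mem' := by
    intro a b ha hb i hi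
    rw [PowerSeries.coeff_mul] at hi
    obtain ⟨p, hp, hne⟩ := Finset.exists_ne_zero_of_sum_ne_zero hi
    have h1 := ha p.1 (left_ne_zero_of_mul hne)
    have h2 := hb p.2 (right_ne_zero_of_mul hne)
    exact (Finset.HasAntidiagonal.mem_antidiagonal.mp hp) ▸ add_mem h1 h2
  algebraMap_mem' := by
    intro r i hi
    by_cases h : i = 0
    · exact h ▸ (S g).zero_mem
    · exfalso
      apply hi
      have : (algebraMap k (PowerSeries k)) r = PowerSeries.C (R := k) r := rfl
      rw [this, PowerSeries.coeff_C, if_neg h]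

open Classical in
/-- `t^s` as an element of `R` (defined to be `0` if `s ∉ S`). -/
def tR (s : ℕ) : Rsub k g :=
  if h : s ∈ S g then
    ⟨PowerSeries.monomial (R := k) s 1, by
      intro i hi
      rw [PowerSeries.coeff_monomial] at hi
      split at hi
      · next heq => exact heq ▸ h
      · exact absurd rfl hi⟩
  else 0

/-- `m = (t^{g_1}, …, t^{g_n})`, the maximal ideal of `R`. -/
def mI : Ideal (Rsub k g) := Ideal.span (Set.range fun i => tR k g (g i))

lemma tR_mul {s u : ℕ} (hs : s ∈ S g) (hu : u ∈ S g) :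
    tR k g (s + u) = tR k g s * tR k g u := by
  simp only [tR, dif_pos hs, dif_pos hu, dif_pos (add_mem hs hu)]
  apply Subtype.ext
  simp only [MulMemClass.coe_mul]
  show (PowerSeries.monomial (R := k) (s + u)) (1 : k) =
    (PowerSeries.monomial (R := k) s) 1 * (PowerSeries.monomial (R := k) u) 1
  rw [← PowerSeries.X_pow_eq, ← PowerSeries.X_pow_eq, ← PowerSeries.X_pow_eq, pow_add]

lemma setM_subset : ∀ h : ℕ, setM g h ⊆ (S g : Set ℕ) := by
  intro h
  induction h with
  | zero => exact fun s hs => hs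
  | succ h ih =>
    rintro s ⟨u, hu, v, hv, huv⟩
    have : u + v = s := huv
    exact this ▸ add_mem hu.1 (ih hv)

lemma le_of_mem_setM : ∀ h : ℕ, ∀ s ∈ setM g h, h ≤ s := by
  intro h
  induction h with
  | zero => exact fun s _ => Nat.zero_le s
  | succ h ih =>
    rintro s ⟨u, hu, v, hv, huv⟩
    have hsum : u + v = s := huv
    have h1 : 1 ≤ u := Nat.one_le_iff_ne_zero.mpr hu.2
    have h2 := ih v hv
    omega

lemma tR_mem_mI {u : ℕ} (hu : u ∈ S g) (hne : u ≠ 0) : tR k g u ∈ mI k g := by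
  have key : ∀ (x : ℕ) (_ : x ∈ S g), x = 0 ∨ tR k g x ∈ mI k g := by
    intro x hx
    induction hx using AddSubmonoid.closure_induction with
    | mem y hy =>
      obtain ⟨i, rfl⟩ := hy
      exact Or.inr (Ideal.subset_span ⟨i, rfl⟩)
    | zero => exact Or.inl rfl
    | add x y hx hy px py =>
      rcases px with rfl | px
      · rcases py with rfl | py
        · exact Or.inl rfl
        · exact Or.inr (by rwa [zero_add])
      · refine Or.inr ?_
        rw [tR_mul k g hx hy]
        exact Ideal.mul_mem_right _ _ px
  rcases key u hu with rfl | h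
  · exact absurd rfl hne
  · exact h

lemma tR_mem_pow_of_setM : ∀ h : ℕ, ∀ s ∈ setM g h, tR k g s ∈ (mI k g) ^ h := by
  intro h
  induction h with
  | zero =>
    intro s _
    rw [pow_zero, Ideal.one_eq_top]
    exact Submodule.mem_top
  | succ h ih =>
    rintro s ⟨u, hu, v, hv, huv⟩
    have hsum : u + v = s := huv
    rw [← hsum, tR_mul k g hu.1 (setM_subset g h hv), pow_succ, mul_comm (tR k g u)]
    exact Ideal.mul_mem_mul (ih v hv) (tR_mem_mI k g hu.1 hu.2)

lemma mem_setM_ordS {s : ℕ} (hs : s ∈ S g) : s ∈ setM g (ordS g s) := by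
  have : ordS g s ∈ {h | s ∈ setM g h} :=
    Nat.sSup_mem (⟨0, hs⟩ : Set.Nonempty {h | s ∈ setM g h})
      ⟨s, fun h hh => le_of_mem_setM g h s hh⟩
  exact this

lemma tR_mem_pow (s : ℕ) : tR k g s ∈ (mI k g) ^ (ordS g s) := by
  by_cases hs : s ∈ S g
  · exact tR_mem_pow_of_setM k g _ s (mem_setM_ordS g hs)
  · rw [tR, dif_neg hs]
    exact zero_mem _

/-- `G(m) = ⊕_{h ≥ 0} m^h/m^{h+1}`, realized as the Rees algebra `R[mt]`
modulo the extension of `m` (the standard presentation of the associated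
graded ring of a local ring). -/
abbrev grG : Type _ :=
  (reesAlgebra (mI k g)) ⧸
    (Ideal.map (algebraMap (Rsub k g) (reesAlgebra (mI k g))) (mI k g))

/-- The homogeneous maximal ideal `𝓜 = m/m² ⊕ m²/m³ ⊕ ⋯` of `G(m)`: the image
of the ideal of elements of the Rees algebra whose degree-0 coefficient lies
in `m`. -/
def MM : Ideal (grG k g) :=
  Ideal.map (Ideal.Quotient.mk _)
    (Ideal.comap ((Polynomial.evalRingHom (0 : Rsub k g)).comp
      (reesAlgebra (mI k g)).val.toRingHom) (mI k g))

/-- The reduction number `r` of `m`: the least `r` with `m^{r+1} = t^{g_1}·m^r`. -/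
def rnum : ℕ :=
  sInf {j | (mI k g) ^ (j + 1) = Ideal.span {tR k g (g 0)} * (mI k g) ^ j}

/-- The initial form `t^s*` of `t^s` in `G(m)`, i.e. the image of `t^s` in
`m^{ord(s)}/m^{ord(s)+1}` (the degree-`ord(s)` component of `G(m)`). -/
def tstar (s : ℕ) : grG k g :=
  Ideal.Quotient.mk _
    ⟨(Polynomial.monomial (ordS g s)) (tR k g s),
      reesAlgebra.monomial_mem.mpr (tR_mem_pow k g s)⟩

/-- `(0 :_{G(m)} 𝓜^r) = H⁰_𝓜(G(m))`. -/
def annM : Ideal (grG k g) := Submodule.colon ⊥ ((MM k g ^ rnum k g : Ideal (grG k g)) : Set (grG k g))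

/-- `(0 :_{G(m)} 𝓜)`. -/
def ann1 : Ideal (grG k g) := Submodule.colon ⊥ ((MM k g : Ideal (grG k g)) : Set (grG k g))

/-- `G(m)` is Buchsbaum iff `(0 :_{G(m)} 𝓜) = (0 :_{G(m)} 𝓜^r)`. -/
def IsBuchsbaum : Prop := ann1 k g = annM k g

/-- `G(m)` is Cohen-Macaulay iff `(0 :_{G(m)} 𝓜^r) = 0`. -/
def IsCM : Prop := annM k g = ⊥

/-- `l_i = max { l | t^{ω_i + l g_1}* ∈ (0 :_{G(m)} 𝓜^r) }`. -/
def lℓ (i : ℕ) : ℕ := sSup {l | tstar k g (ap g i + l * g 0) ∈ annM k g}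

/-- The length of a `G(m)`-module: the Krull dimension of its lattice of
submodules, i.e. the longest length of a chain of submodules. -/
def lenOf (M : Type*) [AddCommGroup M] [Module (grG k g) M] : WithBot ℕ∞ :=
  Order.krullDim (Submodule (grG k g) M)

/-- The socle `(0 :_{G/ξG} 𝓜) = ((ξ) :_G 𝓜)/(ξ)` of `G(m)/ξ·G(m)`, where
`ξ = t^{g_1}*` is the canonical degree-one homogeneous parameter of `G(m)`. -/
abbrev socQ : Type _ :=
  ↥(Submodule.colon (Ideal.span {tstar k g (g 0)}) (MM k g)) ⧸
    (Submodule.comap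
      (Submodule.colon (Ideal.span {tstar k g (g 0)}) (MM k g)).subtype
      (Ideal.span {tstar k g (g 0)}))

/-- `G(m)` is Gorenstein: Cohen-Macaulay of type 1, i.e. Cohen-Macaulay and
the socle of `G(m)` modulo the homogeneous parameter `ξ = t^{g_1}*` has
length 1 as a `G(m)`-module. -/
def IsGor : Prop := IsCM k g ∧ lenOf k g (socQ k g) = 1

/-!
For `e ≥ r` the equality `m^{e+1} = t^{g_1} m^e` lets one cancel copies of `g_1` in `eM`
(`r` is a genuine minimum here: by pigeonhole, a sum of more than `(n+1) g_1` generators can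
always give up a copy of `g_1`). Since every `x ∈ S'` satisfies `x + L g_1 ∈ LM` for some `L`,
this gives `S' + eM ⊆ eM`. Writing `ω_i = ω'_i + a_i g_1` with `ω'_i ∈ S'` we get
`ω_i + eM ⊆ (e + a_i)M ⊆ (b_i + e + 1)M`, i.e. `t^{ω_i} m^e ⊆ m^{b_i+e+1}`, so `(t^{ω_i})*` is
killed by `𝓜^r`, hence by `𝓜` since `G(m)` is Buchsbaum. But if `ω_i ≤_M ω_j` through `s ≠ 0`,
then `(t^{ω_i})* (t^s)* = (t^{ω_j})* ≠ 0` while `(t^s)* ∈ 𝓜`.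
-/

end NumSgrp

namespace reesAlgebra

variable {R : Type*} [CommRing R] {I : Ideal R}

lemma monomial_mem_map_algebraMap {d : ℕ} {c : R} (hc : c ∈ I ^ d * I) :
    (⟨monomial d c, reesAlgebra.monomial_mem.mpr (Ideal.mul_le_left hc)⟩ : reesAlgebra I) ∈
      I.map (algebraMap R (reesAlgebra I)) := by
  induction hc using Submodule.mul_induction_on' with
  | mem_mul_mem a ha b hb =>
    have : (⟨monomial d (a * b), reesAlgebra.monomial_mem.mpr (Ideal.mul_mem_right b _ ha)⟩ :
        reesAlgebra I) = algebraMap R _ b * ⟨monomial d a, reesAlgebra.monomial_mem.mpr ha⟩ :=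
      Subtype.ext <| by
        rw [MulMemClass.coe_mul]
        show monomial d (a * b) = C b * monomial d a
        rw [C_mul_monomial, mul_comm]
    rw [this]
    exact Ideal.mul_mem_right _ _ (Ideal.mem_map_of_mem _ hb)
  | add x _ y _ hx hy =>
    convert add_mem hx hy using 1
    exact Subtype.ext (map_add _ _ _)

lemma mem_map_algebraMap_iff {f : reesAlgebra I} :
    f ∈ I.map (algebraMap R (reesAlgebra I)) ↔ ∀ d, (f : R[X]).coeff d ∈ I ^ (d + 1) := by
  constructor
  · intro hf
    induction hf using Submodule.span_induction with
    | mem x hx =>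
      obtain ⟨r, hr, rfl⟩ := hx
      intro d
      rcases d with _ | d
      · show (C r).coeff 0 ∈ _
        simpa using hr
      · show (C r).coeff (d + 1) ∈ _
        simp
    | zero => simp
    | add x y _ _ hx hy => exact fun d => by simpa using add_mem (hx d) (hy d)
    | smul a x _ hx =>
      intro d
      rw [smul_eq_mul, MulMemClass.coe_mul, coeff_mul]
      refine Ideal.sum_mem _ fun p hp => ?_
      rw [← Finset.HasAntidiagonal.mem_antidiagonal.mp hp, add_assoc, pow_add]
      exact Ideal.mul_mem_mul ((mem_reesAlgebra_iff I _).mp a.2 p.1) (hx p.2)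
  · intro hf
    have : f = ∑ d ∈ (f : R[X]).support, ⟨monomial d ((f : R[X]).coeff d),
        reesAlgebra.monomial_mem.mpr ((mem_reesAlgebra_iff I _).mp f.2 d)⟩ :=
      Subtype.ext <| by simpa using (f : R[X]).as_sum_support
    rw [this]
    exact Ideal.sum_mem _ fun d _ => monomial_mem_map_algebraMap (pow_succ I d ▸ hf d)

/-- `I ⊕ It ⊕ I²t² ⊕ ⋯ ⊆ R[It]`, whose image in `G(I)` is `𝓜` when `I` is maximal. -/
abbrev augIdeal (I : Ideal R) : Ideal (reesAlgebra I) :=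
  Ideal.comap ((Polynomial.evalRingHom (0 : R)).comp (reesAlgebra I).val.toRingHom) I

lemma coeff_mem_pow_max_of_mem_augIdeal {f : reesAlgebra I} (hf : f ∈ augIdeal I)
    (d : ℕ) : (f : R[X]).coeff d ∈ I ^ max d 1 := by
  rcases d with _ | d
  · simpa [coeff_zero_eq_eval_zero] using hf
  · rw [max_eq_left (by omega)]
    exact (mem_reesAlgebra_iff I _).mp f.2 _

lemma coeff_mem_pow_max_of_mem_augIdeal_pow {e : ℕ} {f : reesAlgebra I}
    (hf : f ∈ augIdeal I ^ e) (d : ℕ) : (f : R[X]).coeff d ∈ I ^ max d e := by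
  induction hf using Submodule.pow_induction_on_left' generalizing d with
  | algebraMap r => simpa using (mem_reesAlgebra_iff I _).mp r.2 d
  | add x y i _ _ hx hy => simpa using add_mem (hx d) (hy d)
  | mem_mul m hm i x _ hx =>
    rw [MulMemClass.coe_mul, coeff_mul]
    refine Ideal.sum_mem _ fun p hp => ?_
    have hpd := Finset.HasAntidiagonal.mem_antidiagonal.mp hp
    refine Ideal.pow_le_pow_right ?_ (pow_add I _ _ ▸
      Ideal.mul_mem_mul (coeff_mem_pow_max_of_mem_augIdeal hm p.1) (hx p.2))
    omega

lemma monomial_mul_mem_map_algebraMap {b r : ℕ} {x : R} (hx : x ∈ I ^ b)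
    (hxI : ∀ e, r ≤ e → ∀ z ∈ I ^ e, x * z ∈ I ^ (b + e + 1))
    {y : reesAlgebra I} (hy : y ∈ augIdeal I ^ r) :
    ⟨monomial b x, reesAlgebra.monomial_mem.mpr hx⟩ * y ∈
      I.map (algebraMap R (reesAlgebra I)) := by
  refine mem_map_algebraMap_iff.mpr fun d => ?_
  rw [MulMemClass.coe_mul]
  show (monomial b x * (y : R[X])).coeff d ∈ _
  rw [← C_mul_X_pow_eq_monomial, mul_assoc, coeff_C_mul, coeff_X_pow_mul']
  split_ifs with hbd
  · exact Ideal.pow_le_pow_right (by omega)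
      (hxI _ (le_max_right _ _) _ (coeff_mem_pow_max_of_mem_augIdeal_pow hy (d - b)))
  · rw [mul_zero]
    exact zero_mem _

end reesAlgebra

namespace NumSgrp

variable {k : Type*} [Field k] {n : ℕ} {g : Fin (n + 1) → ℕ}

section Sumset

lemma g_mem_S (j : Fin (n + 1)) : g j ∈ S g := AddSubmonoid.subset_closure ⟨j, rfl⟩

lemma g_ne_zero (hmono : Monotone g) (h0 : 0 < g 0) (j : Fin (n + 1)) : g j ≠ 0 :=
  (h0.trans_le (hmono (Fin.zero_le j))).ne'

lemma add_mem_setM_of_mem_S {x : ℕ} (hx : x ∈ S g) :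
    ∀ {h y : ℕ}, y ∈ setM g h → x + y ∈ setM g h
  | 0, _, hy => add_mem hx hy
  | _ + 1, _, ⟨m, hm, v, hv, hmv⟩ =>
    ⟨m, hm, x + v, add_mem_setM_of_mem_S hx hv, by beta_reduce at hmv ⊢; omega⟩

lemma add_mem_setM_add {a b x y : ℕ} (hx : x ∈ setM g a) (hy : y ∈ setM g b) :
    x + y ∈ setM g (a + b) := by
  induction a generalizing x with
  | zero => simpa using add_mem_setM_of_mem_S hx hy
  | succ a ih =>
    obtain ⟨m, hm, v, hv, rfl⟩ := hx
    rw [Nat.succ_add]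
    exact ⟨m, hm, v + y, ih hv, (add_assoc m v y).symm⟩

lemma setM_succ_subset : ∀ h, setM g (h + 1) ⊆ setM g h
  | 0 => by
    rintro _ ⟨m, hm, v, hv, rfl⟩
    exact add_mem hm.1 hv
  | h + 1 => by
    rintro _ ⟨m, hm, v, hv, rfl⟩
    exact ⟨m, hm, v, setM_succ_subset h hv, rfl⟩

lemma setM_antitone : Antitone (setM g) := antitone_nat_of_succ_le setM_succ_subset

lemma mem_setM_one {s : ℕ} (hs : s ∈ S g) (hs0 : s ≠ 0) : s ∈ setM g 1 :=
  ⟨s, ⟨hs, hs0⟩, 0, (S g).zero_mem, add_zero s⟩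

lemma mul_mem_setM {s : ℕ} (hs : s ∈ S g) (hs0 : s ≠ 0) : ∀ c, c * s ∈ setM g c
  | 0 => by rw [zero_mul]; exact (S g).zero_mem
  | c + 1 => ⟨s, ⟨hs, hs0⟩, c * s, mul_mem_setM hs hs0 c, by ring⟩

lemma le_ordS {s h : ℕ} (hs : s ∈ setM g h) : h ≤ ordS g s :=
  le_csSup ⟨s, fun h hh => le_of_mem_setM g h s hh⟩ hs

end Sumset

section Expansion

lemma exists_sum_of_mem_S {u : ℕ} (hu : u ∈ S g) :
    ∃ c : Fin (n + 1) → ℕ, u = ∑ j, c j * g j := by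
  induction hu using AddSubmonoid.closure_induction with
  | mem x hx =>
    obtain ⟨j, rfl⟩ := hx
    exact ⟨Pi.single j 1, by simp [Pi.single_apply]⟩
  | zero => exact ⟨0, by simp⟩
  | add x y _ _ hx hy =>
    obtain ⟨c, rfl⟩ := hx
    obtain ⟨d, rfl⟩ := hy
    exact ⟨c + d, by simp [add_mul, Finset.sum_add_distrib]⟩

lemma exists_sum_of_mem_setM : ∀ {h u : ℕ}, u ∈ setM g h →
    ∃ c : Fin (n + 1) → ℕ, u = ∑ j, c j * g j ∧ h ≤ ∑ j, c j
  | 0, _, hu => (exists_sum_of_mem_S hu).imp fun _ hc => ⟨hc, Nat.zero_le _⟩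
  | _ + 1, _, ⟨m, ⟨hm, hm0⟩, v, hv, hmv⟩ => by
    obtain ⟨c, rfl⟩ := exists_sum_of_mem_S hm
    obtain ⟨d, rfl, hd⟩ := exists_sum_of_mem_setM hv
    have hc : ∑ j, c j ≠ 0 := fun hc0 => hm0 (by simp [Finset.sum_eq_zero_iff.mp hc0])
    refine ⟨c + d, by simp [← hmv, add_mul, Finset.sum_add_distrib], ?_⟩
    simp only [Pi.add_apply, Finset.sum_add_distrib]
    omega

lemma sum_mul_mem_setM (hpos : ∀ j, g j ≠ 0) (c : Fin (n + 1) → ℕ)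
    (T : Finset (Fin (n + 1))) :
    ∑ j ∈ T, c j * g j ∈ setM g (∑ j ∈ T, c j) := by
  classical
  induction T using Finset.induction_on with
  | empty => exact (S g).zero_mem
  | insert a T ha ih =>
    rw [Finset.sum_insert ha, Finset.sum_insert ha]
    exact add_mem_setM_add (mul_mem_setM (g_mem_S a) (hpos a) (c a)) ih

lemma exists_add_g0_eq_of_mem_setM (hmono : Monotone g) (h0 : 0 < g 0) {h u : ℕ}
    (hh : (n + 1) * g 0 ≤ h) (hu : u ∈ setM g (h + 1)) : ∃ w ∈ setM g h, u = w + g 0 := by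
  have hpos := g_ne_zero hmono h0
  obtain ⟨c, rfl, hc⟩ := exists_sum_of_mem_setM hu
  obtain ⟨j, -, hj⟩ : ∃ j ∈ Finset.univ, g 0 - 1 < c j := by
    refine Finset.exists_lt_of_sum_lt ?_
    simp only [Finset.sum_const, Finset.card_univ, Fintype.card_fin, smul_eq_mul]
    have : (n + 1) * (g 0 - 1) ≤ (n + 1) * g 0 := Nat.mul_le_mul_left _ (Nat.sub_le _ _)
    omega
  have hgj : g 0 ≤ g j := hmono (Fin.zero_le j)
  rw [← Finset.add_sum_erase _ _ (Finset.mem_univ j)] at hc ⊢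
  -- trade `g 0` copies of `g j` for `g j` copies of `g 0`, then drop one `g 0`
  refine ⟨(c j - g 0) * g j + (g j - 1) * g 0 + ∑ j' ∈ Finset.univ.erase j, c j' * g j',
    setM_antitone ?_ (add_mem_setM_add (add_mem_setM_add (mul_mem_setM (g_mem_S j) (hpos j) _)
      (mul_mem_setM (g_mem_S 0) (hpos 0) _)) (sum_mul_mem_setM hpos c _)), ?_⟩
  · omega
  · have : c j * g j = (c j - g 0) * g j + (g j - 1) * g 0 + g 0 := by
      zify [show g 0 ≤ c j by omega, show 1 ≤ g j by omega]
      ring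
    omega

end Expansion

section BlowUp

lemma g0_mem_S' : g 0 ∈ S' g := AddSubmonoid.subset_closure (Set.mem_insert _ _)

lemma g_sub_g0_mem_S' (j : Fin (n + 1)) : g j - g 0 ∈ S' g :=
  AddSubmonoid.subset_closure (Set.mem_insert_of_mem _ ⟨j, rfl⟩)

lemma S_le_S' (hmono : Monotone g) : S g ≤ S' g := by
  refine AddSubmonoid.closure_le.mpr ?_
  rintro _ ⟨j, rfl⟩
  rw [← Nat.sub_add_cancel (hmono (Fin.zero_le j))]
  exact add_mem (g_sub_g0_mem_S' j) g0_mem_S'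

lemma exists_mem_S'_of_mem_setM (hmono : Monotone g) {h u : ℕ} (hu : u ∈ setM g h) :
    ∃ y ∈ S' g, u = y + h * g 0 := by
  obtain ⟨c, rfl, hc⟩ := exists_sum_of_mem_setM hu
  refine ⟨∑ j, c j * (g j - g 0) + (∑ j, c j - h) * g 0,
    add_mem (sum_mem fun j _ => ?_) ?_, ?_⟩
  · simpa using (S' g).nsmul_mem (g_sub_g0_mem_S' j) (c j)
  · simpa using (S' g).nsmul_mem g0_mem_S' (∑ j, c j - h)
  · have hsplit : ∀ j, c j * g j = c j * (g j - g 0) + c j * g 0 := fun j => by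
      rw [← mul_add, Nat.sub_add_cancel (hmono (Fin.zero_le j))]
    rw [Finset.sum_congr rfl fun j _ => hsplit j, Finset.sum_add_distrib, ← Finset.sum_mul,
      add_assoc, ← add_mul, Nat.sub_add_cancel hc]

lemma exists_add_mul_mem_setM_of_mem_S' (hmono : Monotone g) (h0 : 0 < g 0) {x : ℕ}
    (hx : x ∈ S' g) : ∃ L, x + L * g 0 ∈ setM g L := by
  induction hx using AddSubmonoid.closure_induction with
  | mem z hz =>
    rcases hz with rfl | ⟨j, rfl⟩
    · exact ⟨0, by rw [zero_mul, add_zero]; exact g_mem_S 0⟩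
    · refine ⟨1, ?_⟩
      rw [one_mul, Nat.sub_add_cancel (hmono (Fin.zero_le j))]
      exact mem_setM_one (g_mem_S j) (g_ne_zero hmono h0 j)
  | zero => exact ⟨0, by rw [zero_mul, add_zero]; exact (S g).zero_mem⟩
  | add a b _ _ ha hb =>
    obtain ⟨La, hLa⟩ := ha
    obtain ⟨Lb, hLb⟩ := hb
    exact ⟨La + Lb, by convert add_mem_setM_add hLa hLb using 1; ring⟩

end BlowUp

section Apery

variable {i : ℕ}

lemma exists_mem_S_mod_eq (hgcd : Finset.univ.gcd g = 1) (hi : i < g 0) :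
    ∃ s ∈ S g, s % g 0 = i := by
  have hgcd' : Nat.setGcd (Set.range g) = 1 := by
    have := Finset.dvd_gcd (s := Finset.univ) (f := g) fun j _ =>
      Nat.setGcd_dvd_of_mem (Set.mem_range_self j)
    rwa [hgcd, Nat.dvd_one] at this
  obtain ⟨N, hN⟩ := Nat.exists_mem_closure_of_ge (Set.range g)
  refine ⟨N * g 0 + i, hN _ ?_ (by rw [hgcd']; exact one_dvd _), ?_⟩
  · have := Nat.le_mul_of_pos_right N (show 0 < g 0 by omega)
    omega
  · rw [Nat.mul_add_mod_self_right, Nat.mod_eq_of_lt hi]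

lemma ap_spec (hg : MinGen g) (hi : i < g 0) : ap g i ∈ S g ∧ ap g i % g 0 = i :=
  Nat.sInf_mem (exists_mem_S_mod_eq hg.gcdeq hi)

lemma ap'_spec (hg : MinGen g) (hi : i < g 0) : ap' g i ∈ S' g ∧ ap' g i % g 0 = i :=
  have ⟨s, hs, hsi⟩ := exists_mem_S_mod_eq hg.gcdeq hi
  Nat.sInf_mem (s := {s | s ∈ S' g ∧ s % g 0 = i}) ⟨s, S_le_S' hg.smono.monotone hs, hsi⟩

lemma ap_eq_ap'_add (hg : MinGen g) (hi : i < g 0) : ap g i = ap' g i + aa g i * g 0 := by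
  have hap := ap_spec hg hi
  have hap' := ap'_spec hg hi
  have hle : ap' g i ≤ ap g i := Nat.sInf_le ⟨S_le_S' hg.smono.monotone hap.1, hap.2⟩
  have hdvd : g 0 ∣ ap g i - ap' g i :=
    Nat.dvd_of_mod_eq_zero (Nat.sub_mod_eq_zero_of_mod_eq (hap.2.trans hap'.2.symm))
  have : aa g i * g 0 = ap g i - ap' g i := Nat.div_mul_cancel hdvd
  omega

end Apery

section Reduction

lemma tR_coe {v : ℕ} (hv : v ∈ S g) :
    (tR k g v : PowerSeries k) = PowerSeries.monomial (R := k) v 1 := by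
  rw [tR, dif_pos hv]

lemma tR_zero : tR k g 0 = 1 := Subtype.ext <| by
  rw [tR_coe (S g).zero_mem]
  simp

lemma mI_pow_eq_span (hpos : ∀ j, g j ≠ 0) (e : ℕ) :
    mI k g ^ e = Ideal.span (tR k g '' setM g e) := by
  refine le_antisymm ?_
    (Ideal.span_le.mpr fun _ ⟨v, hv, hx⟩ => hx ▸ tR_mem_pow_of_setM k g e v hv)
  induction e with
  | zero =>
    rw [pow_zero, Ideal.one_eq_top, top_le_iff, Ideal.eq_top_iff_one, ← tR_zero]
    exact Ideal.subset_span ⟨0, (S g).zero_mem, rfl⟩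
  | succ e ih =>
    refine (pow_succ (mI k g) e ▸ Ideal.mul_mono_left ih).trans ?_
    rw [mI, Ideal.span_mul_span', Ideal.span_le]
    rintro _ ⟨_, ⟨v, hv, rfl⟩, _, ⟨l, rfl⟩, rfl⟩
    beta_reduce
    rw [← tR_mul k g (setM_subset g e hv) (g_mem_S l)]
    exact Ideal.subset_span ⟨_, add_mem_setM_add hv (mem_setM_one (g_mem_S l) (hpos l)), rfl⟩

lemma mem_setM_of_coeff_ne_zero (hpos : ∀ j, g j ≠ 0) {e c : ℕ} {z : Rsub k g}
    (hz : z ∈ mI k g ^ e) (hc : PowerSeries.coeff (R := k) c (z : PowerSeries k) ≠ 0) :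
    c ∈ setM g e := by
  rw [mI_pow_eq_span hpos] at hz
  induction hz using Submodule.span_induction generalizing c with
  | mem x hx =>
    obtain ⟨v, hv, rfl⟩ := hx
    rw [tR_coe (setM_subset g e hv), PowerSeries.coeff_monomial] at hc
    split_ifs at hc with hcv
    · exact hcv ▸ hv
    · exact absurd rfl hc
  | zero => simp at hc
  | add x y _ _ hx hy =>
    rw [Subalgebra.coe_add, map_add] at hc
    by_cases hxc : PowerSeries.coeff (R := k) c (x : PowerSeries k) = 0
    · rw [hxc, zero_add] at hc
      exact hy hc
    · exact hx hxc
  | smul a x _ hx =>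
    rw [smul_eq_mul, Subalgebra.coe_mul, PowerSeries.coeff_mul] at hc
    obtain ⟨p, hp, hne⟩ := Finset.exists_ne_zero_of_sum_ne_zero hc
    rw [← Finset.HasAntidiagonal.mem_antidiagonal.mp hp]
    exact add_mem_setM_of_mem_S (a.2 _ (left_ne_zero_of_mul hne)) (hx (right_ne_zero_of_mul hne))

lemma mI_pow_succ_eq (hmono : Monotone g) (h0 : 0 < g 0) {h : ℕ} (hh : (n + 1) * g 0 ≤ h) :
    mI k g ^ (h + 1) = Ideal.span {tR k g (g 0)} * mI k g ^ h := by
  refine le_antisymm ?_ ?_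
  · rw [mI_pow_eq_span (g_ne_zero hmono h0) (h + 1), Ideal.span_le]
    rintro _ ⟨u, hu, rfl⟩
    obtain ⟨w, hw, rfl⟩ := exists_add_g0_eq_of_mem_setM hmono h0 hh hu
    rw [add_comm w, tR_mul k g (g_mem_S 0) (setM_subset g h hw)]
    exact Ideal.mul_mem_mul (Ideal.mem_span_singleton_self _) (tR_mem_pow_of_setM k g h w hw)
  · rw [pow_succ']
    exact Ideal.mul_mono_left
      ((Ideal.span_singleton_le_iff_mem _).mpr (Ideal.subset_span ⟨0, rfl⟩))

lemma mI_pow_succ_eq_of_rnum_le (hmono : Monotone g) (h0 : 0 < g 0) {K : ℕ}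
    (hK : rnum k g ≤ K) : mI k g ^ (K + 1) = Ideal.span {tR k g (g 0)} * mI k g ^ K := by
  induction K, hK using Nat.le_induction with
  | base =>
    exact Nat.sInf_mem (s := {j | mI k g ^ (j + 1) = Ideal.span {tR k g (g 0)} * mI k g ^ j})
      ⟨_, mI_pow_succ_eq hmono h0 le_rfl⟩
  | succ K _ ih =>
    conv_lhs => rw [pow_succ, ih]
    rw [mul_assoc, ← pow_succ]

lemma mem_setM_of_add_g0_mem (hmono : Monotone g) (h0 : 0 < g 0) {K w : ℕ}
    (hK : rnum k g ≤ K) (hw : w + g 0 ∈ setM g (K + 1)) : w ∈ setM g K := by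
  have hmem : tR k g (w + g 0) ∈ Ideal.span {tR k g (g 0)} * mI k g ^ K :=
    mI_pow_succ_eq_of_rnum_le hmono h0 hK ▸ tR_mem_pow_of_setM k g _ _ hw
  obtain ⟨z, hz, hzw⟩ := Ideal.mem_span_singleton_mul.mp hmem
  -- `t^{g 0}` is a nonzerodivisor in `k[[t]]`, so `z = t^w`
  have hz' : (z : PowerSeries k) = PowerSeries.X ^ w := by
    have := congrArg Subtype.val hzw
    rw [Subalgebra.coe_mul, tR_coe (g_mem_S 0), tR_coe (setM_subset g _ hw),
      ← PowerSeries.X_pow_eq, ← PowerSeries.X_pow_eq, pow_add,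
      mul_comm (PowerSeries.X ^ w)] at this
    exact mul_left_cancel₀ (pow_ne_zero _ PowerSeries.X_ne_zero) this
  exact mem_setM_of_coeff_ne_zero (g_ne_zero hmono h0) hz (by simp [hz'])

lemma mem_setM_of_add_mul_mem (hmono : Monotone g) (h0 : 0 < g 0) {K w : ℕ}
    (hK : rnum k g ≤ K) : ∀ L, w + L * g 0 ∈ setM g (K + L) → w ∈ setM g K
  | 0, hw => by simpa using hw
  | L + 1, hw => by
    refine mem_setM_of_add_mul_mem hmono h0 hK L
      (mem_setM_of_add_g0_mem (k := k) (K := K + L) hmono h0 (by omega) ?_)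
    rwa [show K + (L + 1) = K + L + 1 by ring, show w + (L + 1) * g 0 = w + L * g 0 + g 0 by ring]
      at hw

lemma add_mem_setM_of_mem_S' (hmono : Monotone g) (h0 : 0 < g 0) {e x u : ℕ}
    (he : rnum k g ≤ e) (hx : x ∈ S' g) (hu : u ∈ setM g e) : x + u ∈ setM g e := by
  obtain ⟨y, hy, rfl⟩ := exists_mem_S'_of_mem_setM hmono hu
  obtain ⟨L, hL⟩ := exists_add_mul_mem_setM_of_mem_S' hmono h0 (add_mem hx hy)
  refine mem_setM_of_add_mul_mem hmono h0 he L ?_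
  convert add_mem_setM_add (mul_mem_setM (g_mem_S 0) (g_ne_zero hmono h0 0) e) hL using 1
  ring

lemma ap_add_mem_setM (hg : MinGen g) {i e u : ℕ} (hi : i < g 0) (hab : bb g i < aa g i)
    (he : rnum k g ≤ e) (hu : u ∈ setM g e) : ap g i + u ∈ setM g (bb g i + e + 1) := by
  have hmono := hg.smono.monotone
  have h0 : 0 < g 0 := by omega
  have hmem := add_mem_setM_add (add_mem_setM_of_mem_S' hmono h0 he (ap'_spec hg hi).1 hu)
    (mul_mem_setM (g_mem_S 0) (g_ne_zero hmono h0 0) (aa g i))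
  rw [ap_eq_ap'_add hg hi]
  refine setM_antitone (show bb g i + e + 1 ≤ e + aa g i by omega) ?_
  convert hmem using 1
  ring

lemma tR_mul_mem_mI_pow (hpos : ∀ j, g j ≠ 0) {w e h : ℕ} (hw : w ∈ S g)
    (hwu : ∀ u ∈ setM g e, w + u ∈ setM g h) {z : Rsub k g} (hz : z ∈ mI k g ^ e) :
    tR k g w * z ∈ mI k g ^ h := by
  have hle : Ideal.span (tR k g '' setM g e) ≤ (mI k g ^ h).colon {tR k g w} := by
    rw [Ideal.span_le]
    rintro _ ⟨u, hu, rfl⟩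
    rw [SetLike.mem_coe, Submodule.mem_colon]
    rintro _ rfl
    rw [smul_eq_mul, ← tR_mul k g (setM_subset g e hu) hw, add_comm]
    exact tR_mem_pow_of_setM k g h _ (hwu u hu)
  have := Submodule.mem_colon.mp (hle (mI_pow_eq_span (k := k) hpos e ▸ hz)) _
    (Set.mem_singleton _)
  rwa [smul_eq_mul, mul_comm] at this

end Reduction

section InitialForms

lemma tstar_ne_zero (hpos : ∀ j, g j ≠ 0) {v : ℕ} (hv : v ∈ S g) : tstar k g v ≠ 0 := by
  intro h
  rw [tstar, Ideal.Quotient.eq_zero_iff_mem, reesAlgebra.mem_map_algebraMap_iff] at h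
  have hv' := h (ordS g v)
  rw [coeff_monomial_same] at hv'
  have := le_ordS (mem_setM_of_coeff_ne_zero (c := v) hpos hv' (by simp [tR_coe hv]))
  omega

lemma tstar_mul_tstar {u s : ℕ} (hu : u ∈ S g) (hs : s ∈ S g)
    (hord : ordS g u + ordS g s = ordS g (u + s)) :
    tstar k g u * tstar k g s = tstar k g (u + s) := by
  rw [tstar, tstar, tstar, ← map_mul]
  congr 1
  refine Subtype.ext ?_
  rw [MulMemClass.coe_mul]
  show monomial (ordS g u) (tR k g u) * monomial (ordS g s) (tR k g s) =
    monomial (ordS g (u + s)) (tR k g (u + s))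
  rw [monomial_mul_monomial, hord, tR_mul k g hu hs]

lemma tstar_mem_MM {s : ℕ} (hs : s ∈ S g) (hs0 : s ≠ 0) : tstar k g s ∈ MM k g := by
  refine Ideal.mem_map_of_mem _ (Ideal.mem_comap.mpr ?_)
  have hord : ordS g s ≠ 0 := Nat.one_le_iff_ne_zero.mp (le_ordS (mem_setM_one hs hs0))
  show eval 0 (monomial (ordS g s) (tR k g s)) ∈ mI k g
  rw [eval_monomial, zero_pow hord, mul_zero]
  exact zero_mem _

lemma tstar_ap_mem_annM (hg : MinGen g) {i : ℕ} (hi : i < g 0) (hab : bb g i < aa g i) :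
    tstar k g (ap g i) ∈ annM k g := by
  have hpos := g_ne_zero hg.smono.monotone (show 0 < g 0 by omega)
  rw [annM, Submodule.mem_colon]
  intro p hp
  have hp' :
      p ∈ Ideal.map (Ideal.Quotient.mk _) (reesAlgebra.augIdeal (mI k g) ^ rnum k g) := by
    rw [SetLike.mem_coe, MM] at hp
    convert hp using 1
    exact Ideal.map_pow
      (Ideal.Quotient.mk ((mI k g).map (algebraMap (Rsub k g) (reesAlgebra (mI k g))))) _ _
  obtain ⟨y, hy, rfl⟩ := (Ideal.mem_map_iff_of_surjective _ Ideal.Quotient.mk_surjective).mp hp'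
  rw [smul_eq_mul, tstar, ← map_mul, Submodule.mem_bot, Ideal.Quotient.eq_zero_iff_mem]
  exact reesAlgebra.monomial_mul_mem_map_algebraMap (tR_mem_pow k g _)
    (fun e he z hz => tR_mul_mem_mI_pow hpos (ap_spec hg hi).1
      (fun u hu => ap_add_mem_setM hg hi hab he hu) hz) hy

end InitialForms

theorem statement11_general {k : Type*} [Field k] {n : ℕ} (g : Fin (n + 1) → ℕ)
    (hg : MinGen g) (hB : IsBuchsbaum k g) (i : ℕ) (hi : i < g 0)
    (hab : bb g i < aa g i) :
    ap g i ∈ maxAp g := by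
  refine ⟨⟨i, hi, rfl⟩, ?_⟩
  rintro _ ⟨j, hj, rfl⟩ ⟨s, hs, hsum, hord⟩
  obtain rfl | hs0 := eq_or_ne s 0
  · exact hsum.symm.trans (add_zero _)
  have hann : tstar k g (ap g i) ∈ ann1 k g :=
    (hB : ann1 k g = annM k g) ▸ tstar_ap_mem_annM hg hi hab
  have hzero := Submodule.mem_colon.mp hann _ (tstar_mem_MM hs hs0)
  rw [smul_eq_mul, Submodule.mem_bot, tstar_mul_tstar (ap_spec hg hi).1 hs (hsum ▸ hord),
    hsum] at hzero
  exact absurd hzero (tstar_ne_zero (g_ne_zero hg.smono.monotone (by omega)) (ap_spec hg hj).1)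

/-- Proposition 14. Assume `G(m)` is Buchsbaum. If `i` is an
index with `a_i > b_i`, then `ω_i ∈ maxAp_M(S)`, i.e. `ω_i` is a maximal
element of the Apery set `Ap_{g_1}(S)` with respect to `≤_M`. -/
theorem statement11 {k : Type*} [Field k] [Infinite k] {n : ℕ} (g : Fin (n + 1) → ℕ)
    (hg : MinGen g) (hB : IsBuchsbaum k g) (i : ℕ) (hi : i < g 0)
    (hab : bb g i < aa g i) :
    ap g i ∈ maxAp g :=
  statement11_general g hg hB i hi hab

end NumSgrp
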